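/- Let q > 0. The Mittag-Leffler Bargmann transform B_q is a surjective isometry from L²(ℝ,ℂ) onto the Mittag-Leffler Fock space ML_q(ℂ). -/

import Mathlib

open MeasureTheory Complex ENNReal NNReal
open scoped InnerProductSpace ComplexConjugate

/-- The ML-Bargmann kernel `A_q(z,x) = ∑ conj(z)ⁿ ψₙ(x)/√Γ(qn+1)`. -/
noncomputable def Aq (q : ℝ) (ψ : ℕ → ℝ → ℂ) (z : ℂ) (x : ℝ) : ℂ :=
  ∑' n : ℕ, ((starRingEnd ℂ) z) ^ n / (Real.sqrt (Real.Gamma (q * n + 1)) : ℂ) * ψ n x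

lemma gamma_ratio (q : ℝ) (hq : 0 < q) (k : ℕ) (hk : 1 ≤ q * k) (n : ℕ) :
    (q * n + 1) * Real.Gamma (q * n + 1) ≤ Real.Gamma (q * (n + k) + 1) := by
  have h1 : (q * n + 1) * Real.Gamma (q * n + 1) = Real.Gamma (q * n + 2) := by
    have := Real.Gamma_add_one (s := q * n + 1) (by positivity)
    rw [show q * n + 1 + 1 = q * n + 2 by ring] at this
    rw [this]
  rw [h1]
  have hn : (0:ℝ) ≤ q * n := by positivity
  apply Real.Gamma_strictMonoOn_Ici.monotoneOn
  · simp only [Set.mem_Ici]; linarith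
  · simp only [Set.mem_Ici]; nlinarith
  · nlinarith

lemma key_step (q : ℝ) (hq : 0 < q) (r : ℝ) (hr : 0 ≤ r) (k : ℕ) (hk : 1 ≤ q * k)
    (n : ℕ) (hn : 4 * r ^ (2 * k) ≤ q * n) :
    r ^ (n + k) / Real.sqrt (Real.Gamma (q * ((n:ℝ) + k) + 1))
      ≤ (1/2) * (r ^ n / Real.sqrt (Real.Gamma (q * n + 1))) := by
  have hA : 0 < Real.Gamma (q * n + 1) := Real.Gamma_pos_of_pos (by positivity)
  have hApos : 0 < Real.sqrt (Real.Gamma (q * n + 1)) := Real.sqrt_pos.mpr hA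
  have hstep := gamma_ratio q hq k hk n
  have hsqB : Real.sqrt ((q * n + 1) * Real.Gamma (q * n + 1))
      ≤ Real.sqrt (Real.Gamma (q * ((n : ℝ) + k) + 1)) := by
    push_cast
    exact Real.sqrt_le_sqrt (by push_cast at hstep ⊢; linarith)
  rw [Real.sqrt_mul (by positivity)] at hsqB
  have hq1pos : 0 < Real.sqrt (q * n + 1) := Real.sqrt_pos.mpr (by positivity)
  have h4 : (2 * r ^ k) ^ 2 ≤ q * n + 1 := by
    have he : (2 * r ^ k) ^ 2 = 4 * r ^ (2 * k) := by
      rw [mul_pow, ← pow_mul, mul_comm k 2]; norm_num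
    rw [he]; linarith
  have h5 : 2 * r ^ k ≤ Real.sqrt (q * n + 1) := by
    rw [show (2 : ℝ) * r ^ k = Real.sqrt ((2 * r ^ k)^2) from
      (Real.sqrt_sq (by positivity)).symm]
    exact Real.sqrt_le_sqrt h4
  have e1 : r ^ (n + k) / Real.sqrt (Real.Gamma (q * ((n:ℝ) + k) + 1))
      ≤ r ^ n * r ^ k / (Real.sqrt (q * n + 1) * Real.sqrt (Real.Gamma (q * n + 1))) := by
    rw [pow_add]
    exact div_le_div_of_nonneg_left (by positivity) (by positivity) hsqB
  refine e1.trans ?_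
  have e2 : r ^ n * r ^ k / (Real.sqrt (q * n + 1) * Real.sqrt (Real.Gamma (q * n + 1)))
      = (r ^ k / Real.sqrt (q * n + 1)) * (r ^ n / Real.sqrt (Real.Gamma (q * n + 1))) := by
    field_simp
  rw [e2]
  apply mul_le_mul_of_nonneg_right _ (by positivity)
  rw [div_le_iff₀ hq1pos]
  linarith

lemma sum_rn_gamma (q : ℝ) (hq : 0 < q) (r : ℝ) (hr : 0 ≤ r) :
    Summable (fun n : ℕ => r ^ n / Real.sqrt (Real.Gamma (q * n + 1))) := by
  classical
  set f : ℕ → ℝ := fun n => r ^ n / Real.sqrt (Real.Gamma (q * n + 1)) with hf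
  have hfpos : ∀ n, 0 ≤ f n := fun n =>
    div_nonneg (pow_nonneg hr _) (Real.sqrt_nonneg _)
  set k : ℕ := ⌈1 / q⌉₊ + 1 with hkdef
  haveI : NeZero k := ⟨by omega⟩
  have hk : 1 ≤ q * k := by
    have h1 : (1:ℝ)/q ≤ k := by
      calc (1:ℝ)/q ≤ ⌈1/q⌉₊ := Nat.le_ceil _
      _ ≤ k := by exact_mod_cast Nat.le_succ _
    calc (1:ℝ) = q * (1/q) := by field_simp
    _ ≤ q * k := by apply mul_le_mul_of_nonneg_left h1 hq.le
  rw [← (Nat.divModEquiv k).symm.summable_iff]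
  have hslice : ∀ j : Fin k, Summable (fun m : ℕ => f (m * k + j)) := by
    intro j
    apply summable_of_ratio_norm_eventually_le (r := 1/2) (by norm_num)
    filter_upwards [Filter.eventually_ge_atTop ⌈4 * r ^ (2*k) / q⌉₊] with m hm
    have hmn : 4 * r ^ (2 * k) ≤ q * ((m * k + j : ℕ) : ℝ) := by
      have h1 : 4 * r ^ (2*k) / q ≤ (m : ℝ) := le_trans (Nat.le_ceil _) (by exact_mod_cast hm)
      have h2 : (m : ℝ) ≤ ((m * k + j : ℕ) : ℝ) := by
        push_cast
        nlinarith [j.2, (Nat.one_le_iff_ne_zero.mpr (NeZero.ne k) : 1 ≤ k),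
          (by exact_mod_cast Nat.one_le_iff_ne_zero.mpr (NeZero.ne k) : (1:ℝ) ≤ (k:ℝ)),
          Nat.cast_nonneg (α := ℝ) m, Nat.cast_nonneg (α := ℝ) (j : ℕ)]
      calc 4 * r ^ (2*k) = (4 * r ^ (2*k) / q) * q := by field_simp
      _ ≤ (m : ℝ) * q := mul_le_mul_of_nonneg_right h1 hq.le
      _ = q * (m:ℝ) := mul_comm _ _
      _ ≤ q * ((m * k + j : ℕ) : ℝ) := mul_le_mul_of_nonneg_left h2 hq.le
    have hthis := key_step q hq r hr k hk (m * k + j) hmn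
    have heq : (m + 1) * k + (j : ℕ) = (m * k + (j:ℕ)) + k := by ring
    rw [Real.norm_of_nonneg (hfpos _), Real.norm_of_nonneg (hfpos _), heq]
    simp only [hf]
    push_cast at hthis ⊢
    convert hthis using 4 <;> push_cast <;> ring
  apply (summable_prod_of_nonneg (f := f ∘ ⇑(Nat.divModEquiv k).symm) (fun p => hfpos _)).mpr
  constructor
  · intro m
    exact Summable.of_finite
  · have hcomp : ∀ (m : ℕ) (j : Fin k), (f ∘ ⇑(Nat.divModEquiv k).symm) (m, j)
        = f (m * k + (j:ℕ)) := by
      intro m j; simp [Nat.divModEquiv]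
    simp only [hcomp]
    have hs : Summable (fun m : ℕ => ∑ j : Fin k, f (m * k + (j:ℕ))) :=
      summable_sum (fun j _ => hslice j)
    exact hs.congr (fun m => (tsum_fintype _).symm)

lemma MLB_swap_integral (q : ℝ) (hq : 0 < q) (ψ : ℕ → ℝ → ℂ)
    (hmem : ∀ n, MemLp (ψ n) 2 (volume : Measure ℝ))
    (hnorm : ∀ n, eLpNorm (ψ n) 2 (volume : Measure ℝ) = 1)
    (z : ℂ) (φ : ℝ → ℂ) (hφ : MemLp φ 2 (volume : Measure ℝ)) :
    (∫ x : ℝ, (starRingEnd ℂ) (Aq q ψ z x) * φ x)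
      = ∑' n : ℕ, z ^ n / (Real.sqrt (Real.Gamma (q * n + 1)) : ℂ)
          * ∫ x : ℝ, (starRingEnd ℂ) (ψ n x) * φ x := by
  classical
  set c : ℕ → ℝ := fun n => ‖z‖ ^ n / Real.sqrt (Real.Gamma (q * n + 1)) with hc
  have hcnonneg : ∀ n, 0 ≤ c n := fun n => div_nonneg (pow_nonneg (norm_nonneg _) _)
    (Real.sqrt_nonneg _)
  have hcsum : Summable c := sum_rn_gamma q hq ‖z‖ (norm_nonneg _)
  set F : ℕ → ℝ → ℂ := fun n x =>
    z ^ n / (Real.sqrt (Real.Gamma (q * n + 1)) : ℂ) * ((starRingEnd ℂ) (ψ n x) * φ x)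
    with hF
  -- pointwise identity
  have hpt : ∀ x : ℝ, (starRingEnd ℂ) (Aq q ψ z x) * φ x = ∑' n, F n x := by
    intro x
    rw [Aq, Complex.conj_tsum,
      ← tsum_mul_right (f := fun n : ℕ => (starRingEnd ℂ)
        ((starRingEnd ℂ) z ^ n / (Real.sqrt (Real.Gamma (q * n + 1)) : ℂ) * ψ n x)) (a := φ x)]
    apply tsum_congr
    intro n
    simp only [map_mul, map_div₀, map_pow, Complex.conj_conj, Complex.conj_ofReal, hF]
    ring
  -- measurability
  have hmeas : ∀ n, AEStronglyMeasurable (F n) (volume : Measure ℝ) := by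
    intro n
    apply AEStronglyMeasurable.const_mul
    exact ((Complex.continuous_conj.comp_aestronglyMeasurable
      (hmem n).aestronglyMeasurable).mul hφ.aestronglyMeasurable)
  -- L¹ bounds via Hölder
  have hnn : ∀ n x, (‖F n x‖₊ : ℝ≥0∞)
      = (‖z ^ n / (Real.sqrt (Real.Gamma (q * n + 1)) : ℂ)‖₊ : ℝ≥0∞)
        * ((‖ψ n x‖₊ : ℝ≥0∞) * (‖φ x‖₊ : ℝ≥0∞)) := by
    intro n x
    rw [hF]
    simp only [nnnorm_mul, ENNReal.coe_mul, RCLike.nnnorm_conj]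
  have hbound : ∀ n, (∫⁻ x, ‖F n x‖₊ ∂(volume : Measure ℝ))
      ≤ ENNReal.ofReal (c n) * eLpNorm φ 2 (volume : Measure ℝ) := by
    intro n
    have hHolder := ENNReal.lintegral_mul_le_Lp_mul_Lq (volume : Measure ℝ)
      Real.HolderConjugate.two_two
      ((hmem n).aestronglyMeasurable.enorm) (hφ.aestronglyMeasurable.enorm)
    simp only [Pi.mul_apply] at hHolder
    have heψ : eLpNorm (ψ n) 2 (volume : Measure ℝ)
        = (∫⁻ x, (‖ψ n x‖₊ : ℝ≥0∞) ^ (2:ℝ) ∂(volume : Measure ℝ)) ^ ((1:ℝ)/2) := by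
      rw [eLpNorm_eq_lintegral_rpow_enorm_toReal (by norm_num) (by norm_num)]
      norm_num
      rfl
    have heφ : eLpNorm φ 2 (volume : Measure ℝ)
        = (∫⁻ x, (‖φ x‖₊ : ℝ≥0∞) ^ (2:ℝ) ∂(volume : Measure ℝ)) ^ ((1:ℝ)/2) := by
      rw [eLpNorm_eq_lintegral_rpow_enorm_toReal (by norm_num) (by norm_num)]
      norm_num
      rfl
    have hCeq : ((‖z ^ n / (Real.sqrt (Real.Gamma (q * n + 1)) : ℂ)‖₊ : ℝ≥0∞))
        = ENNReal.ofReal (c n) := by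
      rw [← ENNReal.ofReal_coe_nnreal, coe_nnnorm]
      congr 1
      rw [norm_div, norm_pow, Complex.norm_real, Real.norm_eq_abs,
        _root_.abs_of_nonneg (Real.sqrt_nonneg _), hc]
    calc (∫⁻ x, ‖F n x‖₊ ∂(volume : Measure ℝ))
        = ∫⁻ x, (‖z ^ n / (Real.sqrt (Real.Gamma (q * n + 1)) : ℂ)‖₊ : ℝ≥0∞)
            * ((‖ψ n x‖₊ : ℝ≥0∞) * (‖φ x‖₊ : ℝ≥0∞)) ∂(volume : Measure ℝ) :=
          lintegral_congr (hnn n)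
      _ = (‖z ^ n / (Real.sqrt (Real.Gamma (q * n + 1)) : ℂ)‖₊ : ℝ≥0∞)
            * ∫⁻ x, (‖ψ n x‖₊ : ℝ≥0∞) * (‖φ x‖₊ : ℝ≥0∞) ∂(volume : Measure ℝ) :=
          lintegral_const_mul' _ _ ENNReal.coe_ne_top
      _ ≤ (‖z ^ n / (Real.sqrt (Real.Gamma (q * n + 1)) : ℂ)‖₊ : ℝ≥0∞)
            * (eLpNorm (ψ n) 2 (volume : Measure ℝ) * eLpNorm φ 2 (volume : Measure ℝ)) := by
          rw [heψ, heφ]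
          exact mul_le_mul_right hHolder _
      _ = ENNReal.ofReal (c n) * eLpNorm φ 2 (volume : Measure ℝ) := by
          rw [hCeq, hnorm n, one_mul]
  -- summability of the upper bounds
  have hfS : (∑' n, ∫⁻ x, ‖F n x‖₊ ∂(volume : Measure ℝ)) ≠ ⊤ := by
    apply ne_top_of_le_ne_top _ (ENNReal.tsum_le_tsum hbound)
    rw [ENNReal.tsum_mul_right, ← ENNReal.ofReal_tsum_of_nonneg hcnonneg hcsum]
    exact ENNReal.mul_ne_top ENNReal.ofReal_ne_top hφ.2.ne
  have hrw : (fun x : ℝ => (starRingEnd ℂ) (Aq q ψ z x) * φ x) = fun x => ∑' n, F n x :=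
    funext hpt
  calc (∫ x : ℝ, (starRingEnd ℂ) (Aq q ψ z x) * φ x)
      = ∫ x : ℝ, ∑' n, F n x := by rw [hrw]
    _ = ∑' n, ∫ x : ℝ, F n x := integral_tsum hmeas hfS
    _ = ∑' n : ℕ, z ^ n / (Real.sqrt (Real.Gamma (q * n + 1)) : ℂ)
          * ∫ x : ℝ, (starRingEnd ℂ) (ψ n x) * φ x := by
        apply tsum_congr
        intro n
        exact integral_const_mul _ _

/-- For `q > 0`, the Mittag-Leffler Bargmann transform `B_q` is a surjective isometry
from `L²(ℝ,ℂ)` onto the Mittag-Leffler Fock space `ML_q(ℂ)`: every `B_q(φ)` is a power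
series `Σ aₙ zⁿ` with `Σ Γ(qn+1)|aₙ|² = ‖φ‖²`, and conversely every element of
`ML_q(ℂ)` arises as `B_q(φ)` for some `φ ∈ L²(ℝ,ℂ)`. -/
theorem MLB_unitary_onto (q : ℝ) (hq : 0 < q) (ψ : ℕ → ℝ → ℂ)
    (hmem : ∀ n, MemLp (ψ n) 2 (volume : Measure ℝ))
    (horth : ∀ j k : ℕ, ∫ x : ℝ, ψ j x * (starRingEnd ℂ) (ψ k x)
      = if j = k then (1 : ℂ) else 0)
    (htotal : ∀ φ : ℝ → ℂ, MemLp φ 2 (volume : Measure ℝ) →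
      (∀ n : ℕ, (∫ x : ℝ, (starRingEnd ℂ) (ψ n x) * φ x) = 0) →
      φ =ᵐ[(volume : Measure ℝ)] 0) :
    (∀ φ : ℝ → ℂ, MemLp φ 2 (volume : Measure ℝ) →
      ∃ a : ℕ → ℂ,
        (∀ z : ℂ, (∫ x : ℝ, (starRingEnd ℂ) (Aq q ψ z x) * φ x) = ∑' n : ℕ, a n * z ^ n) ∧
        (∑' n : ℕ, Real.Gamma (q * n + 1) * ‖a n‖ ^ 2) = ∫ x : ℝ, ‖φ x‖ ^ 2)
    ∧ (∀ a : ℕ → ℂ, Summable (fun n : ℕ => Real.Gamma (q * n + 1) * ‖a n‖ ^ 2) →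
        ∃ φ : ℝ → ℂ, MemLp φ 2 (volume : Measure ℝ) ∧
          ∀ z : ℂ, (∫ x : ℝ, (starRingEnd ℂ) (Aq q ψ z x) * φ x) = ∑' n : ℕ, a n * z ^ n) := by
  classical
  have hΓpos : ∀ n : ℕ, (0:ℝ) < Real.Gamma (q * n + 1) := fun n =>
    Real.Gamma_pos_of_pos (by positivity)
  have hsqrtpos : ∀ n : ℕ, (0:ℝ) < Real.sqrt (Real.Gamma (q * n + 1)) := fun n =>
    Real.sqrt_pos.mpr (hΓpos n)
  have hsqrtne : ∀ n : ℕ, ((Real.sqrt (Real.Gamma (q * n + 1)) : ℂ)) ≠ 0 := fun n => by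
    exact_mod_cast (hsqrtpos n).ne'
  have conjmul : ∀ w : ℂ, (starRingEnd ℂ) w * w = ((‖w‖ ^ 2 : ℝ) : ℂ) := by
    intro w
    rw [mul_comm, Complex.mul_conj, Complex.normSq_eq_norm_sq]
  set E : ℕ → Lp ℂ 2 (volume : Measure ℝ) := fun n => (hmem n).toLp (ψ n) with hE
  -- inner products in L² are the integrals we care about
  have innerE : ∀ (n : ℕ) (f : Lp ℂ 2 (volume : Measure ℝ)),
      ⟪E n, f⟫_ℂ = ∫ x : ℝ, (starRingEnd ℂ) (ψ n x) * f x := by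
    intro n f
    rw [L2.inner_def]
    apply integral_congr_ae
    filter_upwards [(hmem n).coeFn_toLp] with x hx
    rw [RCLike.inner_apply, hx, mul_comm]
  -- orthonormality
  have horthE : Orthonormal ℂ E := by
    rw [orthonormal_iff_ite]
    intro j k
    rw [innerE j (E k)]
    have h1 : (∫ x : ℝ, (starRingEnd ℂ) (ψ j x) * (E k) x)
        = ∫ x : ℝ, (starRingEnd ℂ) (ψ j x) * ψ k x := by
      apply integral_congr_ae
      filter_upwards [(hmem k).coeFn_toLp] with x hx
      rw [hx]
    rw [h1]
    have h2 := congrArg (starRingEnd ℂ) (horth j k)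
    rw [← integral_conj] at h2
    have h3 : (fun x : ℝ => (starRingEnd ℂ) (ψ j x * (starRingEnd ℂ) (ψ k x)))
        = fun x : ℝ => (starRingEnd ℂ) (ψ j x) * ψ k x := by
      funext x; rw [map_mul, Complex.conj_conj]
    rw [h3] at h2
    rw [h2]
    split <;> simp
  have hnormE : ∀ n, ‖E n‖ = 1 := horthE.1
  have hnorm : ∀ n, eLpNorm (ψ n) 2 (volume : Measure ℝ) = 1 := by
    intro n
    have h1 : eLpNorm (⇑(E n)) 2 (volume : Measure ℝ) = eLpNorm (ψ n) 2 (volume : Measure ℝ) :=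
      eLpNorm_congr_ae ((hmem n).coeFn_toLp)
    have h2 := hnormE n
    rw [Lp.norm_def, h1] at h2
    exact (ENNReal.toReal_eq_one_iff _).mp h2
  -- Hilbert basis
  have hbot : (Submodule.span ℂ (Set.range E))ᗮ = ⊥ := by
    rw [Submodule.eq_bot_iff]
    intro f hf
    rw [Submodule.mem_orthogonal] at hf
    have hz : ∀ n : ℕ, (∫ x : ℝ, (starRingEnd ℂ) (ψ n x) * f x) = 0 := by
      intro n
      rw [← innerE n f]
      exact hf (E n) (Submodule.subset_span (Set.mem_range_self n))
    have h0 := htotal (⇑f) (Lp.memLp f) hz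
    exact Lp.ext (h0.trans (Lp.coeFn_zero ℂ 2 (volume : Measure ℝ)).symm)
  set b : HilbertBasis ℕ ℂ (Lp ℂ 2 (volume : Measure ℝ)) :=
    HilbertBasis.mkOfOrthogonalEqBot horthE hbot with hb
  have hbcoe : ⇑b = E := HilbertBasis.coe_mkOfOrthogonalEqBot horthE hbot
  -- Parseval
  have parseval : ∀ f : Lp ℂ 2 (volume : Measure ℝ),
      (∑' n : ℕ, ‖⟪E n, f⟫_ℂ‖ ^ 2) = ‖f‖ ^ 2 := by
    intro f
    have h1 := b.tsum_inner_mul_inner f f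
    have hterm : ∀ n : ℕ, ⟪f, b n⟫_ℂ * ⟪b n, f⟫_ℂ = ((‖⟪E n, f⟫_ℂ‖ ^ 2 : ℝ) : ℂ) := by
      intro n
      have hbn : b n = E n := congrFun hbcoe n
      have hconj : ⟪f, E n⟫_ℂ = (starRingEnd ℂ) ⟪E n, f⟫_ℂ := (inner_conj_symm f (E n)).symm
      rw [hbn, hconj]
      exact conjmul _
    rw [show (fun n : ℕ => ⟪f, b n⟫_ℂ * ⟪b n, f⟫_ℂ)
        = fun n : ℕ => ((‖⟪E n, f⟫_ℂ‖ ^ 2 : ℝ) : ℂ) from funext hterm,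
      ← Complex.ofReal_tsum, inner_self_eq_norm_sq_to_K] at h1
    have h2 : ((∑' n : ℕ, ‖⟪E n, f⟫_ℂ‖ ^ 2 : ℝ) : ℂ) = ((‖f‖ ^ 2 : ℝ) : ℂ) := by
      rw [h1]; norm_cast
    exact Complex.ofReal_injective h2
  -- L² norm squared as integral
  have normsq : ∀ (φ : ℝ → ℂ) (hφ : MemLp φ 2 (volume : Measure ℝ)),
      (‖hφ.toLp φ‖ : ℝ) ^ 2 = ∫ x : ℝ, ‖φ x‖ ^ 2 := by
    intro φ hφ
    have h1 : ⟪hφ.toLp φ, hφ.toLp φ⟫_ℂ = ∫ x : ℝ, ((‖φ x‖ ^ 2 : ℝ) : ℂ) := by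
      rw [L2.inner_def]
      apply integral_congr_ae
      filter_upwards [hφ.coeFn_toLp] with x hx
      rw [RCLike.inner_apply, hx]
      exact (mul_comm _ _).trans (conjmul _)
    rw [show (∫ x : ℝ, ((‖φ x‖ ^ 2 : ℝ) : ℂ)) = (((∫ x : ℝ, ‖φ x‖ ^ 2) : ℝ) : ℂ) from
      integral_ofReal, inner_self_eq_norm_sq_to_K] at h1
    have h2 : ((‖MemLp.toLp φ hφ‖ ^ 2 : ℝ) : ℂ) = (((∫ x : ℝ, ‖φ x‖ ^ 2) : ℝ) : ℂ) := by
      rw [← h1]; norm_cast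
    exact Complex.ofReal_injective h2
  constructor
  · -- forward direction
    intro φ hφ
    set f : Lp ℂ 2 (volume : Measure ℝ) := hφ.toLp φ with hfdef
    have hIn : ∀ n : ℕ, ⟪E n, f⟫_ℂ = ∫ x : ℝ, (starRingEnd ℂ) (ψ n x) * φ x := by
      intro n
      rw [innerE n f]
      apply integral_congr_ae
      filter_upwards [hφ.coeFn_toLp] with x hx
      rw [hx]
    refine ⟨fun n => (∫ x : ℝ, (starRingEnd ℂ) (ψ n x) * φ x)
      / (Real.sqrt (Real.Gamma (q * n + 1)) : ℂ), ?_, ?_⟩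
    · intro z
      rw [MLB_swap_integral q hq ψ hmem hnorm z φ hφ]
      apply tsum_congr
      intro n
      ring
    · have hterm : ∀ n : ℕ, Real.Gamma (q * n + 1)
          * ‖(∫ x : ℝ, (starRingEnd ℂ) (ψ n x) * φ x)
              / (Real.sqrt (Real.Gamma (q * n + 1)) : ℂ)‖ ^ 2
          = ‖⟪E n, f⟫_ℂ‖ ^ 2 := by
        intro n
        rw [hIn n, norm_div, Complex.norm_real, Real.norm_eq_abs,
          _root_.abs_of_nonneg (Real.sqrt_nonneg _), div_pow,
          Real.sq_sqrt (hΓpos n).le]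
        field_simp
      rw [show (fun n : ℕ => Real.Gamma (q * n + 1)
          * ‖(∫ x : ℝ, (starRingEnd ℂ) (ψ n x) * φ x)
              / (Real.sqrt (Real.Gamma (q * n + 1)) : ℂ)‖ ^ 2)
          = fun n : ℕ => ‖⟪E n, f⟫_ℂ‖ ^ 2 from funext hterm]
      rw [parseval f]
      exact normsq φ hφ
  · -- surjectivity
    intro a ha
    set d : ℕ → ℂ := fun n => (Real.sqrt (Real.Gamma (q * n + 1)) : ℂ) * a n with hd
    have hd2 : Summable fun n : ℕ => ‖d n‖ ^ ((2 : ℝ≥0∞)).toReal := by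
      have : ∀ n : ℕ, ‖d n‖ ^ ((2 : ℝ≥0∞)).toReal = Real.Gamma (q * n + 1) * ‖a n‖ ^ 2 := by
        intro n
        rw [ENNReal.toReal_ofNat, Real.rpow_two, hd]
        simp only [norm_mul, Complex.norm_real, Real.norm_eq_abs,
          _root_.abs_of_nonneg (Real.sqrt_nonneg _)]
        rw [mul_pow, Real.sq_sqrt (hΓpos n).le]
      exact (ha.congr (fun n => (this n).symm))
    set dlp : lp (fun _ : ℕ => ℂ) 2 := ⟨d, memℓp_gen hd2⟩ with hdlp
    set f : Lp ℂ 2 (volume : Measure ℝ) := b.repr.symm dlp with hf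
    have hcoef : ∀ n : ℕ, ⟪E n, f⟫_ℂ = d n := by
      intro n
      have h1 : b.repr f = dlp := b.repr.apply_symm_apply dlp
      have hbn : b n = E n := congrFun hbcoe n
      rw [← hbn, ← b.repr_apply_apply, h1]
    refine ⟨⇑f, Lp.memLp f, ?_⟩
    intro z
    rw [MLB_swap_integral q hq ψ hmem hnorm z (⇑f) (Lp.memLp f)]
    apply tsum_congr
    intro n
    rw [← innerE n f, hcoef n, hd]
    have hcalc : z ^ n / (Real.sqrt (Real.Gamma (q * n + 1)) : ℂ)
        * ((Real.sqrt (Real.Gamma (q * n + 1)) : ℂ) * a n)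
        = ((Real.sqrt (Real.Gamma (q * n + 1)) : ℂ) / (Real.sqrt (Real.Gamma (q * n + 1)) : ℂ))
          * (a n * z ^ n) := by ring
    rw [hcalc, div_self (hsqrtne n), one_mul]
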